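/- Let p and p̂ be probability mass functions on {0,1,...,k} with |p̂(i) - p(i)| ≤ ε·√(p(i)) for all i. Let E, Ê be the means and Var, V̂ar the variances under p and p̂ respectively. Then |V̂ar - Var| ≤ ε·(k+1)·(√((2k+1)·Var/6) + ε·Var). -/

import Mathlib

/-!
Write `E` for the mean of `p`. The variance of `p̂` is its second moment about `E` minus
`(Ê - E)²`, so `V̂ar - Var = ∑ (i - E)² (p̂ i - p i) - (Ê - E)²`. Both `Ê - E = ∑ (i - E) (p̂ i - p i)`
and the first sum are controlled by Cauchy–Schwarz once `|p̂ i - p i| ≤ ε √(p i)` is used: one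
factor becomes `√Var`, the other `√(k + 1)`, resp. `√(∑ (i - E)²)`. Since `0 ≤ E ≤ k`, the latter
is at most `(k + 1) √((2k + 1) / 6)`.
-/

open Finset

section WeightedVariance

variable {ι : Type*} (s : Finset ι) (w : ι → ℝ) (x : ι → ℝ)

def weightedMean : ℝ := ∑ i ∈ s, x i * w i

def weightedVariance : ℝ := ∑ i ∈ s, (x i - weightedMean s w x) ^ 2 * w i

variable {s w x} {ŵ : ι → ℝ} {ε : ℝ}

lemma weightedVariance_nonneg (hw : ∀ i ∈ s, 0 ≤ w i) : 0 ≤ weightedVariance s w x :=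
  sum_nonneg fun i hi => mul_nonneg (sq_nonneg _) (hw i hi)

lemma weightedMean_nonneg (hw : ∀ i ∈ s, 0 ≤ w i) (hx : ∀ i ∈ s, 0 ≤ x i) :
    0 ≤ weightedMean s w x :=
  sum_nonneg fun i hi => mul_nonneg (hx i hi) (hw i hi)

lemma weightedMean_le (hw : ∀ i ∈ s, 0 ≤ w i) (hsum : ∑ i ∈ s, w i = 1) {b : ℝ}
    (hx : ∀ i ∈ s, x i ≤ b) : weightedMean s w x ≤ b :=
  calc weightedMean s w x ≤ ∑ i ∈ s, b * w i :=
        sum_le_sum fun i hi => mul_le_mul_of_nonneg_right (hx i hi) (hw i hi)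
    _ = b := by rw [← mul_sum, hsum, mul_one]

lemma weightedMean_sub_weightedMean (h : ∑ i ∈ s, ŵ i = ∑ i ∈ s, w i) (c : ℝ) :
    weightedMean s ŵ x - weightedMean s w x = ∑ i ∈ s, (x i - c) * (ŵ i - w i) := by
  simp only [weightedMean, sub_mul, mul_sub, sum_sub_distrib, ← mul_sum, h]
  ring

lemma weightedVariance_eq_sum_sub_sq_sub (hsum : ∑ i ∈ s, w i = 1) (c : ℝ) :
    weightedVariance s w x = ∑ i ∈ s, (x i - c) ^ 2 * w i - (weightedMean s w x - c) ^ 2 := by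
  have hmean : ∑ i ∈ s, (x i - c) * w i = weightedMean s w x - c := by
    simp only [weightedMean, sub_mul, sum_sub_distrib, ← mul_sum, hsum, mul_one]
  have hexpand : ∀ i ∈ s, (x i - weightedMean s w x) ^ 2 * w i
      = (x i - c) ^ 2 * w i - 2 * (weightedMean s w x - c) * ((x i - c) * w i)
        + (weightedMean s w x - c) ^ 2 * w i := fun i _ => by ring
  rw [weightedVariance, sum_congr rfl hexpand, sum_add_distrib, sum_sub_distrib, ← mul_sum,
    ← mul_sum, hmean, hsum]
  ring

lemma weightedVariance_sub_weightedVariance (hsum : ∑ i ∈ s, ŵ i = 1) :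
    weightedVariance s ŵ x - weightedVariance s w x
      = ∑ i ∈ s, (x i - weightedMean s w x) ^ 2 * (ŵ i - w i)
        - (weightedMean s ŵ x - weightedMean s w x) ^ 2 := by
  rw [weightedVariance_eq_sum_sub_sq_sub hsum (weightedMean s w x), weightedVariance]
  simp only [mul_sub, sum_sub_distrib]
  ring

section Perturbation

variable (hw : ∀ i ∈ s, 0 ≤ w i) (hε : 0 ≤ ε)
  (hclose : ∀ i ∈ s, |ŵ i - w i| ≤ ε * √(w i))
include hw hε hclose

/-- Cauchy–Schwarz, after bounding each `|ŵ i - w i|` by `ε * √(w i)`. -/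
lemma abs_sum_mul_mul_sub_le (a b : ι → ℝ) :
    |∑ i ∈ s, a i * b i * (ŵ i - w i)|
      ≤ ε * (√(∑ i ∈ s, a i ^ 2 * w i) * √(∑ i ∈ s, b i ^ 2)) := by
  calc |∑ i ∈ s, a i * b i * (ŵ i - w i)|
      ≤ ∑ i ∈ s, |a i| * |b i| * (ε * √(w i)) := by
        refine (abs_sum_le_sum_abs _ _).trans (sum_le_sum fun i hi => ?_)
        rw [abs_mul, abs_mul]
        gcongr
        exact hclose i hi
    _ = ε * ∑ i ∈ s, (|a i| * √(w i)) * |b i| := by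
        rw [mul_sum]
        exact sum_congr rfl fun i _ => by ring
    _ ≤ ε * (√(∑ i ∈ s, (|a i| * √(w i)) ^ 2) * √(∑ i ∈ s, |b i| ^ 2)) := by
        gcongr
        exact Real.sum_mul_le_sqrt_mul_sqrt _ _ _
    _ = ε * (√(∑ i ∈ s, a i ^ 2 * w i) * √(∑ i ∈ s, b i ^ 2)) := by
        rw [sum_congr rfl fun i hi => by rw [mul_pow, sq_abs, Real.sq_sqrt (hw i hi)],
          sum_congr rfl fun i _ => sq_abs (b i)]

lemma sq_weightedMean_sub_le (hsum : ∑ i ∈ s, w i = 1) (hsumhat : ∑ i ∈ s, ŵ i = 1) :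
    (weightedMean s ŵ x - weightedMean s w x) ^ 2 ≤ ε ^ 2 * #s * weightedVariance s w x := by
  have hdiff : |weightedMean s ŵ x - weightedMean s w x|
      ≤ ε * (√(weightedVariance s w x) * √(#s : ℝ)) := by
    rw [weightedMean_sub_weightedMean (hsumhat.trans hsum.symm) (weightedMean s w x)]
    simpa [weightedVariance] using abs_sum_mul_mul_sub_le hw hε hclose (fun i => x i - weightedMean s w x) 1
  calc (weightedMean s ŵ x - weightedMean s w x) ^ 2
      ≤ (ε * (√(weightedVariance s w x) * √(#s : ℝ))) ^ 2 := by
        rw [← sq_abs]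
        exact pow_le_pow_left₀ (abs_nonneg _) hdiff 2
    _ = ε ^ 2 * #s * weightedVariance s w x := by
        rw [mul_pow, mul_pow, Real.sq_sqrt (weightedVariance_nonneg hw),
          Real.sq_sqrt (by positivity)]
        ring

lemma abs_weightedVariance_sub_le (hsum : ∑ i ∈ s, w i = 1) (hsumhat : ∑ i ∈ s, ŵ i = 1) :
    |weightedVariance s ŵ x - weightedVariance s w x|
      ≤ ε * (√(weightedVariance s w x) * √(∑ i ∈ s, (x i - weightedMean s w x) ^ 2))
        + ε ^ 2 * #s * weightedVariance s w x := by
  have hsecond : |∑ i ∈ s, (x i - weightedMean s w x) ^ 2 * (ŵ i - w i)|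
      ≤ ε * (√(weightedVariance s w x) * √(∑ i ∈ s, (x i - weightedMean s w x) ^ 2)) := by
    simpa only [← sq, weightedVariance] using abs_sum_mul_mul_sub_le hw hε hclose
      (fun i => x i - weightedMean s w x) (fun i => x i - weightedMean s w x)
  rw [weightedVariance_sub_weightedVariance hsumhat]
  refine (abs_sub _ _).trans ?_
  rw [abs_sq]
  exact add_le_add hsecond (sq_weightedMean_sub_le hw hε hclose hsum hsumhat)

end Perturbation

end WeightedVariance

lemma sum_range_sub_sq (k : ℕ) (c : ℝ) :
    ∑ i ∈ range (k + 1), ((i : ℝ) - c) ^ 2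
      = k * (k + 1) * (2 * k + 1) / 6 - (k + 1) * c * (k - c) := by
  induction k with
  | zero => norm_num [sq]
  | succ n ih => rw [sum_range_succ, ih]; push_cast; ring

lemma sum_range_sub_sq_le {k : ℕ} {c : ℝ} (h0 : 0 ≤ c) (hk : c ≤ k) :
    ∑ i ∈ range (k + 1), ((i : ℝ) - c) ^ 2 ≤ (k + 1) ^ 2 * ((2 * k + 1) / 6) := by
  rw [sum_range_sub_sq]
  nlinarith [mul_nonneg h0 (sub_nonneg.mpr hk), (Nat.cast_nonneg k : (0 : ℝ) ≤ k)]

theorem variance_error_bound_sqrt_general (k : ℕ) (ε : ℝ) (hε : 0 ≤ ε) (p phat : ℕ → ℝ)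
    (hp : ∀ i ∈ range (k + 1), 0 ≤ p i)
    (hsum : ∑ i ∈ range (k + 1), p i = 1)
    (hsumhat : ∑ i ∈ range (k + 1), phat i = 1)
    (hbound : ∀ i ∈ range (k + 1), |phat i - p i| ≤ ε * Real.sqrt (p i)) :
    |(∑ i ∈ range (k + 1), ((i : ℝ) - ∑ j ∈ range (k + 1), (j : ℝ) * phat j) ^ 2 * phat i)
        - ∑ i ∈ range (k + 1), ((i : ℝ) - ∑ j ∈ range (k + 1), (j : ℝ) * p j) ^ 2 * p i|
      ≤ ε * ((k : ℝ) + 1) *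
        (Real.sqrt ((2 * (k : ℝ) + 1) *
            (∑ i ∈ range (k + 1),
              ((i : ℝ) - ∑ j ∈ range (k + 1), (j : ℝ) * p j) ^ 2 * p i) / 6)
          + ε * ∑ i ∈ range (k + 1),
              ((i : ℝ) - ∑ j ∈ range (k + 1), (j : ℝ) * p j) ^ 2 * p i) := by
  set E := weightedMean (range (k + 1)) p (fun i : ℕ => (i : ℝ))
  set V := weightedVariance (range (k + 1)) p (fun i : ℕ => (i : ℝ))
  have hV : 0 ≤ V := weightedVariance_nonneg hp
  have hE0 : 0 ≤ E := weightedMean_nonneg hp fun i _ => i.cast_nonneg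
  have hEk : E ≤ k := weightedMean_le hp hsum fun i hi => by
    exact_mod_cast Nat.lt_succ_iff.mp (mem_range.mp hi)
  have hspread : √(∑ i ∈ range (k + 1), ((i : ℝ) - E) ^ 2) ≤ (k + 1) * √((2 * k + 1) / 6) :=
    calc √(∑ i ∈ range (k + 1), ((i : ℝ) - E) ^ 2) ≤ √((k + 1) ^ 2 * ((2 * k + 1) / 6)) :=
          Real.sqrt_le_sqrt (sum_range_sub_sq_le hE0 hEk)
      _ = (k + 1) * √((2 * k + 1) / 6) := by
          rw [Real.sqrt_mul (by positivity), Real.sqrt_sq (by positivity)]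
  have key := abs_weightedVariance_sub_le (x := fun i : ℕ => (i : ℝ)) hp hε hbound hsum hsumhat
  rw [card_range, Nat.cast_add_one] at key
  calc |weightedVariance (range (k + 1)) phat (fun i : ℕ => (i : ℝ)) - V|
      ≤ ε * (√V * ((k + 1) * √((2 * k + 1) / 6))) + ε ^ 2 * (k + 1) * V := by
        refine key.trans ?_
        gcongr
    _ = ε * (k + 1) * (√((2 * k + 1) * V / 6) + ε * V) := by
        rw [show (2 * (k : ℝ) + 1) * V / 6 = (2 * k + 1) / 6 * V by ring, Real.sqrt_mul' _ hV]
        ring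

theorem variance_error_bound_sqrt (k : ℕ) (ε : ℝ) (hε : 0 ≤ ε) (p phat : ℕ → ℝ)
    (hp : ∀ i ∈ range (k + 1), 0 ≤ p i) (hphat : ∀ i ∈ range (k + 1), 0 ≤ phat i)
    (hsum : ∑ i ∈ range (k + 1), p i = 1)
    (hsumhat : ∑ i ∈ range (k + 1), phat i = 1)
    (hbound : ∀ i ∈ range (k + 1), |phat i - p i| ≤ ε * Real.sqrt (p i)) :
    |(∑ i ∈ range (k + 1), ((i : ℝ) - ∑ j ∈ range (k + 1), (j : ℝ) * phat j) ^ 2 * phat i)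
        - ∑ i ∈ range (k + 1), ((i : ℝ) - ∑ j ∈ range (k + 1), (j : ℝ) * p j) ^ 2 * p i|
      ≤ ε * ((k : ℝ) + 1) *
        (Real.sqrt ((2 * (k : ℝ) + 1) *
            (∑ i ∈ range (k + 1),
              ((i : ℝ) - ∑ j ∈ range (k + 1), (j : ℝ) * p j) ^ 2 * p i) / 6)
          + ε * ∑ i ∈ range (k + 1),
              ((i : ℝ) - ∑ j ∈ range (k + 1), (j : ℝ) * p j) ^ 2 * p i) :=
  variance_error_bound_sqrt_general k ε hε p phat hp hsum hsumhat hbound
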